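/- Let A and B be linear subspaces of ℝ^n and set Ã = A + (A^⊥ ∩ B^⊥). Then for every x ∈ A + B, the orthogonal projections of x onto A and onto Ã coincide: P_Ã x = P_A x; consequently the reflections coincide, R_Ã x = R_A x, for all x ∈ A + B. -/

import Mathlib

/-- The reflection across a subspace `K` of Euclidean space, `R_K = 2 P_K - Id`. -/
noncomputable def reflS {n : ℕ} (K : Submodule ℝ (EuclideanSpace ℝ (Fin n)))
    (x : EuclideanSpace ℝ (Fin n)) : EuclideanSpace ℝ (Fin n) :=
  (2:ℝ) • (K.orthogonalProjectionOnto x : EuclideanSpace ℝ (Fin n)) - x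

/-! Enlarging `A` by a subspace `V ⊆ Aᗮ` leaves the projection of `x` unchanged as long as
`x ⟂ V`: the residual `x - P_A x` is then orthogonal to both `A` and `V`. For `V = Aᗮ ∩ Bᗮ`,
every `x ∈ A + B` is orthogonal to `V`, since `V = (A + B)ᗮ`. -/

namespace Submodule

variable {𝕜 E : Type*} [RCLike 𝕜] [NormedAddCommGroup E] [InnerProductSpace 𝕜 E]

theorem starProjection_sup_eq_of_isOrtho {U V : Submodule 𝕜 E} [U.HasOrthogonalProjection]
    [(U ⊔ V).HasOrthogonalProjection] (hUV : U ⟂ V) {x : E} (hx : x ∈ Vᗮ) :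
    (U ⊔ V).starProjection x = U.starProjection x := by
  have hPx : U.starProjection x ∈ Vᗮ := isOrtho_iff_le.mp hUV (U.starProjection_apply_mem x)
  refine eq_starProjection_of_mem_orthogonal (mem_sup_left (U.starProjection_apply_mem x)) ?_
  rw [← inf_orthogonal]
  exact ⟨U.sub_starProjection_mem_orthogonal x, sub_mem hx hPx⟩

theorem sup_le_orthogonal_inf_orthogonal (A B : Submodule 𝕜 E) : A ⊔ B ≤ (Aᗮ ⊓ Bᗮ)ᗮ := by
  rw [inf_orthogonal]
  exact le_orthogonal_orthogonal _

end Submodule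

/-- For linear subspaces `A, B` of ℝⁿ and the enlargement `Ã = A + (A^⊥ ∩ B^⊥)`:
on `A + B` the orthogonal projections (and hence the reflections) onto `A` and onto `Ã`
coincide. -/
theorem stmt14 {n : ℕ} (A B : Submodule ℝ (EuclideanSpace ℝ (Fin n))) :
    ∀ x ∈ (A ⊔ B : Submodule ℝ (EuclideanSpace ℝ (Fin n))),
      ((A ⊔ (Aᗮ ⊓ Bᗮ)).orthogonalProjectionOnto x : EuclideanSpace ℝ (Fin n)) =
        (A.orthogonalProjectionOnto x : EuclideanSpace ℝ (Fin n)) ∧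
      reflS (A ⊔ (Aᗮ ⊓ Bᗮ)) x = reflS A x := by
  intro x hx
  have hproj : (A ⊔ (Aᗮ ⊓ Bᗮ)).starProjection x = A.starProjection x :=
    Submodule.starProjection_sup_eq_of_isOrtho (A.isOrtho_orthogonal_right.mono_right inf_le_left)
      (A.sup_le_orthogonal_inf_orthogonal B hx)
  refine ⟨hproj, ?_⟩
  simp only [reflS, Submodule.coe_orthogonalProjectionOnto_apply, hproj]
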